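/- Let q be a complex number with |q| < 1. Then Σ_{i,j≥0} q^(4i²+2ij−2i+j(j+1)/2) / ((q;q)_{2i} · (q;q)_j) = (−q;q)_∞ · (−q²;q²)_∞. -/

import Mathlib

/-!
Euler's identity `∑ₙ q^(n choose 2) xⁿ / (q;q)ₙ = (-x;q)_∞` does all the work. Its left side
`S x` satisfies `S x = (1 + x) S (q x)`, since `(q;q)ₙ₊₁ = (q;q)ₙ (1 - qⁿ⁺¹)`; iterating and using
`S (x qᴺ) → S 0 = 1` gives the identity.

The exponent splits as `2 (2i choose 2) + (j choose 2) + (2i + 1) j`, so the sum over `j` is Euler's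
series at `x = q^(2i+1)`, namely `(-q^(2i+1);q)_∞ = (-q;q)_∞ / (-q;q)_{2i}`. As
`(q;q)_{2i} (-q;q)_{2i} = (q²;q²)_{2i}`, what remains is `(-q;q)_∞` times the even part of Euler's
series in base `q²` at `x = 1`, which is half of `(-1;q²)_∞ + (1;q²)_∞ = 2 (-q²;q²)_∞ + 0`.
-/

/-- Finite q-Pochhammer symbol `(a; q)_n = ∏_{k=0}^{n-1} (1 - a q^k)`. -/
noncomputable def qPoch (a q : ℂ) (n : ℕ) : ℂ := ∏ k ∈ Finset.range n, (1 - a * q ^ k)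

/-- Infinite q-Pochhammer symbol `(a; q)_∞ = ∏_{k=0}^{∞} (1 - a q^k)`. -/
noncomputable def qPochInf (a q : ℂ) : ℂ := ∏' k : ℕ, (1 - a * q ^ k)

open Finset Filter Topology

lemma qPoch_succ (a q : ℂ) (n : ℕ) : qPoch a q (n + 1) = qPoch a q n * (1 - a * q ^ n) :=
  prod_range_succ _ _

lemma qPoch_mul_qPoch_neg (a q : ℂ) (n : ℕ) :
    qPoch a q n * qPoch (-a) q n = qPoch (a ^ 2) (q ^ 2) n := by
  simp only [qPoch, ← prod_mul_distrib]
  exact prod_congr rfl fun k _ => by ring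

lemma multipliable_one_sub_mul_pow {q : ℂ} (hq : ‖q‖ < 1) (a : ℂ) :
    Multipliable fun k : ℕ => 1 - a * q ^ k := by
  simp_rw [sub_eq_add_neg]
  refine multipliable_one_add_of_summable ?_
  simpa [norm_mul, norm_pow] using (summable_geometric_of_lt_one (norm_nonneg q) hq).mul_left ‖a‖

lemma qPoch_mul_qPochInf_mul_pow {q : ℂ} (hq : ‖q‖ < 1) (a : ℂ) (n : ℕ) :
    qPoch a q n * qPochInf (a * q ^ n) q = qPochInf a q := by
  have hshift : ∀ k, 1 - a * q ^ n * q ^ k = 1 - a * q ^ (k + n) := fun k => by ring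
  have h := Multipliable.prod_mul_tprod_nat_mul' (f := fun k => 1 - a * q ^ k) (k := n)
    ((multipliable_one_sub_mul_pow hq (a * q ^ n)).congr hshift)
  rw [qPoch, qPochInf, qPochInf, tprod_congr hshift, h]

lemma one_sub_norm_le_norm_one_sub_pow_succ {q : ℂ} (hq : ‖q‖ ≤ 1) (n : ℕ) :
    1 - ‖q‖ ≤ ‖1 - q ^ (n + 1)‖ :=
  calc 1 - ‖q‖ ≤ ‖(1 : ℂ)‖ - ‖q ^ (n + 1)‖ := by
        rw [norm_one, norm_pow]
        exact sub_le_sub_left (pow_le_of_le_one (norm_nonneg q) hq n.succ_ne_zero) 1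
    _ ≤ ‖1 - q ^ (n + 1)‖ := norm_sub_norm_le _ _

lemma one_sub_pow_succ_ne_zero {q : ℂ} (hq : ‖q‖ < 1) (n : ℕ) : 1 - q ^ (n + 1) ≠ 0 :=
  norm_pos_iff.1 <| (sub_pos.2 hq).trans_le (one_sub_norm_le_norm_one_sub_pow_succ hq.le n)

lemma qPoch_self_ne_zero {q : ℂ} (hq : ‖q‖ < 1) (n : ℕ) : qPoch q q n ≠ 0 :=
  prod_ne_zero_iff.2 fun k _ => by simpa [← pow_succ'] using one_sub_pow_succ_ne_zero hq k

lemma choose_two_succ (n : ℕ) : (n + 1).choose 2 = n.choose 2 + n := by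
  rw [Nat.choose_succ_succ', Nat.choose_one_right, add_comm]

lemma two_mul_choose_two_add_self (n : ℕ) : 2 * n.choose 2 + n = n ^ 2 := by
  induction n with
  | zero => rfl
  | succ n ih => rw [choose_two_succ]; linear_combination ih

noncomputable def eulerCoeff (q : ℂ) (n : ℕ) : ℂ := q ^ n.choose 2 / qPoch q q n

noncomputable def eulerSeries (q x : ℂ) : ℂ := ∑' n, eulerCoeff q n * x ^ n

lemma eulerCoeff_succ_mul {q : ℂ} (hq : ‖q‖ < 1) (n : ℕ) :
    eulerCoeff q (n + 1) * (1 - q ^ (n + 1)) = eulerCoeff q n * q ^ n := by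
  have h := qPoch_self_ne_zero hq n
  have h' := one_sub_pow_succ_ne_zero hq n
  rw [eulerCoeff, eulerCoeff, qPoch_succ, ← pow_succ', choose_two_succ]
  field_simp
  ring

lemma summable_norm_eulerCoeff_mul_pow {q : ℂ} (hq : ‖q‖ < 1) (x : ℂ) :
    Summable fun n => ‖eulerCoeff q n * x ^ n‖ := by
  have hpos : 0 < 1 - ‖q‖ := sub_pos.2 hq
  have hsmall : ∀ᶠ n : ℕ in atTop, ‖q‖ ^ n * ‖x‖ ≤ (1 - ‖q‖) / 2 := by
    have := (tendsto_pow_atTop_nhds_zero_of_lt_one (norm_nonneg q) hq).mul_const ‖x‖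
    rw [zero_mul] at this
    exact this.eventually_le_const (half_pos hpos)
  refine summable_of_ratio_norm_eventually_le (r := 1 / 2) (by norm_num) ?_
  filter_upwards [hsmall] with n hn
  simp only [norm_norm]
  have hratio : ‖eulerCoeff q (n + 1) * x ^ (n + 1)‖ * ‖1 - q ^ (n + 1)‖ =
      ‖eulerCoeff q n * x ^ n‖ * (‖q‖ ^ n * ‖x‖) := by
    rw [← norm_pow, ← norm_mul, ← norm_mul, ← norm_mul, mul_right_comm, eulerCoeff_succ_mul hq,
      pow_succ]
    ring_nf
  have hden := one_sub_norm_le_norm_one_sub_pow_succ hq.le n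
  nlinarith [norm_nonneg (eulerCoeff q (n + 1) * x ^ (n + 1)), norm_nonneg (eulerCoeff q n * x ^ n)]

lemma eulerSeries_eq_one_add_mul {q : ℂ} (hq : ‖q‖ < 1) (x : ℂ) :
    eulerSeries q x = (1 + x) * eulerSeries q (q * x) := by
  have hx := (summable_norm_eulerCoeff_mul_pow hq x).of_norm
  have hqx := (summable_norm_eulerCoeff_mul_pow hq (q * x)).of_norm
  have hdiff : eulerSeries q x - eulerSeries q (q * x) = x * eulerSeries q (q * x) := by
    rw [eulerSeries, eulerSeries, ← hx.tsum_sub hqx, (hx.sub hqx).tsum_eq_zero_add, ← tsum_mul_left]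
    simp only [pow_zero, sub_self, zero_add]
    congr 1 with n
    linear_combination x ^ (n + 1) * eulerCoeff_succ_mul hq n
  linear_combination hdiff

lemma eulerSeries_eq_qPoch_mul {q : ℂ} (hq : ‖q‖ < 1) (x : ℂ) (N : ℕ) :
    eulerSeries q x = qPoch (-x) q N * eulerSeries q (x * q ^ N) := by
  induction N with
  | zero => simp [qPoch]
  | succ N ih =>
    rw [ih, eulerSeries_eq_one_add_mul hq (x * q ^ N), qPoch_succ, pow_succ]
    ring_nf

lemma eulerSeries_zero (q : ℂ) : eulerSeries q 0 = 1 := by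
  rw [eulerSeries, tsum_eq_single 0 fun n hn => by simp [hn]]
  simp [eulerCoeff, qPoch]

lemma tendsto_eulerSeries_mul_pow {q : ℂ} (hq : ‖q‖ < 1) (x : ℂ) :
    Tendsto (fun N : ℕ => eulerSeries q (x * q ^ N)) atTop (𝓝 1) := by
  rw [← eulerSeries_zero q]
  have hpow : Tendsto (fun N : ℕ => x * q ^ N) atTop (𝓝 0) := by
    simpa using (tendsto_pow_atTop_nhds_zero_of_norm_lt_one hq).const_mul x
  refine tendsto_tsum_of_dominated_convergence (summable_norm_eulerCoeff_mul_pow hq x)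
    (fun n => (hpow.pow n).const_mul _) (Eventually.of_forall fun N n => ?_)
  rw [norm_mul, norm_mul, mul_pow, norm_mul, norm_pow, norm_pow, norm_pow]
  gcongr
  exact mul_le_of_le_one_right (by positivity)
    (pow_le_one₀ (by positivity) (pow_le_one₀ (norm_nonneg _) hq.le))

theorem hasSum_eulerCoeff_mul_pow {q : ℂ} (hq : ‖q‖ < 1) (x : ℂ) :
    HasSum (fun n => eulerCoeff q n * x ^ n) (qPochInf (-x) q) := by
  have hprod : Tendsto (fun N => qPoch (-x) q N) atTop (𝓝 (qPochInf (-x) q)) :=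
    (multipliable_one_sub_mul_pow hq (-x)).hasProd.tendsto_prod_nat
  have hlim := hprod.mul (tendsto_eulerSeries_mul_pow hq x)
  simp_rw [← eulerSeries_eq_qPoch_mul hq, mul_one] at hlim
  rw [← tendsto_const_nhds_iff.1 hlim]
  exact (summable_norm_eulerCoeff_mul_pow hq x).of_norm.hasSum

lemma hasSum_eulerCoeff_two_mul {q : ℂ} (hq : ‖q‖ < 1) :
    HasSum (fun i => eulerCoeff q (2 * i)) (qPochInf (-q) q) := by
  have hplus : qPochInf (-1) q = 2 * qPochInf (-q) q := by
    rw [← qPoch_mul_qPochInf_mul_pow hq (-1) 1]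
    norm_num [qPoch]
  have hminus : qPochInf 1 q = 0 := by
    rw [← qPoch_mul_qPochInf_mul_pow hq 1 1]
    simp [qPoch]
  have hboth := (hasSum_eulerCoeff_mul_pow hq 1).add (hasSum_eulerCoeff_mul_pow hq (-1))
  rw [neg_neg, hplus, hminus, add_zero] at hboth
  have hodd : ∀ n ∉ Set.range (2 * ·), eulerCoeff q n * 1 ^ n + eulerCoeff q n * (-1) ^ n = 0 := by
    intro n hn
    have : Odd n := Nat.not_even_iff_odd.1 fun ⟨k, hk⟩ => hn ⟨k, (two_mul k).trans hk.symm⟩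
    simp [this.neg_one_pow]
  rw [← (mul_right_injective₀ two_ne_zero).hasSum_iff hodd] at hboth
  refine (hasSum_mul_left_iff (two_ne_zero : (2 : ℂ) ≠ 0)).1 (hboth.congr_fun fun i => ?_)
  simp [Function.comp, two_mul]

/-- The summand of the double series, factored so that its sum over `j` is Euler's series at
`x = q^(2i+1)`. -/
noncomputable def eulerRowTerm (q : ℂ) (i j : ℕ) : ℂ :=
  (q ^ 2) ^ (2 * i).choose 2 / qPoch q q (2 * i) * (eulerCoeff q j * (q ^ (2 * i + 1)) ^ j)

lemma exponent_eq_two_mul_choose_two_add (i j : ℕ) :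
    4 * i ^ 2 + 2 * i * j - 2 * i + j * (j + 1) / 2 =
      2 * (2 * i).choose 2 + (j.choose 2 + (2 * i + 1) * j) := by
  have hi : 2 * (2 * i).choose 2 + 2 * i = 4 * i ^ 2 := by
    rw [two_mul_choose_two_add_self]; ring
  have hj : j * (j + 1) / 2 = j.choose 2 + j := by
    rw [← choose_two_succ, Nat.choose_two_right, Nat.add_sub_cancel, mul_comm]
  have hij : (2 * i + 1) * j = 2 * i * j + j := by ring
  omega

lemma pow_div_qPoch_mul_qPoch_eq_eulerRowTerm (q : ℂ) (i j : ℕ) :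
    q ^ (4 * i ^ 2 + 2 * i * j - 2 * i + j * (j + 1) / 2) / (qPoch q q (2 * i) * qPoch q q j) =
      eulerRowTerm q i j := by
  rw [eulerRowTerm, exponent_eq_two_mul_choose_two_add, eulerCoeff, pow_add, pow_add, pow_mul,
    pow_mul]
  ring

lemma norm_eulerRowTerm_le {q : ℂ} (hq : ‖q‖ < 1) (i j : ℕ) :
    ‖eulerRowTerm q i j‖ ≤ ‖eulerCoeff q (2 * i)‖ * ‖eulerCoeff q j‖ := by
  have hq1 : ‖q‖ ≤ 1 := hq.le
  rw [eulerRowTerm, norm_mul]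
  gcongr
  · simp only [eulerCoeff, norm_div, norm_pow]
    gcongr
    exact pow_le_of_le_one (norm_nonneg q) hq1 two_ne_zero
  · rw [norm_mul, norm_pow, norm_pow]
    exact mul_le_of_le_one_right (norm_nonneg _)
      (pow_le_one₀ (by positivity) (pow_le_one₀ (norm_nonneg q) hq1))

lemma hasSum_eulerRowTerm {q : ℂ} (hq : ‖q‖ < 1) (i : ℕ) :
    HasSum (eulerRowTerm q i) (qPochInf (-q) q * eulerCoeff (q ^ 2) (2 * i)) := by
  have hsq := qPoch_mul_qPoch_neg q q (2 * i)
  have hne : qPoch q q (2 * i) * qPoch (-q) q (2 * i) ≠ 0 :=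
    hsq ▸ qPoch_self_ne_zero (by simpa using pow_lt_one₀ (norm_nonneg q) hq two_ne_zero) _
  have hval : qPochInf (-q) q * eulerCoeff (q ^ 2) (2 * i) =
      (q ^ 2) ^ (2 * i).choose 2 / qPoch q q (2 * i) * qPochInf (-(q ^ (2 * i + 1))) q := by
    rw [← qPoch_mul_qPochInf_mul_pow hq (-q) (2 * i), eulerCoeff, ← hsq, neg_mul, ← pow_succ']
    field_simp [left_ne_zero_of_mul hne, right_ne_zero_of_mul hne]
  rw [hval]
  exact (hasSum_eulerCoeff_mul_pow hq _).mul_left _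

lemma summable_eulerRowTerm {q : ℂ} (hq : ‖q‖ < 1) :
    Summable fun p : ℕ × ℕ => eulerRowTerm q p.1 p.2 := by
  refine Summable.of_norm_bounded ?_ fun p => norm_eulerRowTerm_le hq p.1 p.2
  have hc := summable_norm_eulerCoeff_mul_pow hq 1
  simp only [one_pow, mul_one] at hc
  have heven : Summable fun i => ‖eulerCoeff q (2 * i)‖ :=
    hc.comp_injective (mul_right_injective₀ (two_ne_zero : (2 : ℕ) ≠ 0))
  exact heven.mul_of_nonneg hc (fun _ => norm_nonneg _) (fun _ => norm_nonneg _)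

theorem stmt_16 (q : ℂ) (hq : ‖q‖ < 1) :
    (∑' p : ℕ × ℕ,
        q ^ (4 * p.1 ^ 2 + 2 * p.1 * p.2 - 2 * p.1 + p.2 * (p.2 + 1) / 2) /
          (qPoch q q (2 * p.1) * qPoch q q p.2))
      = qPochInf (-q) q * qPochInf (-(q ^ 2)) (q ^ 2) := by
  have hq2 : ‖q ^ 2‖ < 1 := by rw [norm_pow]; exact pow_lt_one₀ (norm_nonneg q) hq two_ne_zero
  simp_rw [pow_div_qPoch_mul_qPoch_eq_eulerRowTerm]
  have hrows : HasSum (fun i => qPochInf (-q) q * eulerCoeff (q ^ 2) (2 * i))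
      (∑' p : ℕ × ℕ, eulerRowTerm q p.1 p.2) :=
    (summable_eulerRowTerm hq).hasSum.prod_fiberwise (hasSum_eulerRowTerm hq)
  exact hrows.unique ((hasSum_eulerCoeff_two_mul hq2).mul_left _)
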